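/- Let S be an additively reduced semidomain and G a linearly ordered torsion-free abelian group. If f = ∑_{i=0}^n s_i x^{g_i} ∈ S[G] with g_0 > ⋯ > g_n, all s_i nonzero, has more than three terms and 2g_1 ≤ g_0 + g_n, then f is monolithic. -/

import Mathlib

/-- Witness that `S` is a semidomain: an injective semiring hom into an integral domain. -/
structure SemidomainWitness (S : Type*) [CommSemiring S] where
  D : Type
  [commRing : CommRing D]
  [isDomain : IsDomain D]
  emb : S →+* D
  inj : Function.Injective emb

/-- `S` is a semidomain, i.e. (isomorphic to) a subsemiring of an integral domain. -/
def IsSemidomain (S : Type*) [CommSemiring S] : Prop := Nonempty (SemidomainWitness S)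

/-- `S` is additively reduced: `0` is the only additively invertible element. -/
def AddReduced (S : Type*) [AddZeroClass S] : Prop := ∀ a b : S, a + b = 0 → a = 0

/-- `s` is an atom of the additive monoid `(S, +)` (for `S` additively reduced):
it is nonzero and cannot be written as a sum of two nonzero elements. -/
def IsAddAtom {S : Type*} [AddZeroClass S] (s : S) : Prop :=
  s ≠ 0 ∧ ∀ a b : S, s = a + b → a = 0 ∨ b = 0

/-- `S` is additively Furstenberg: every nonzero element is divisible in `(S, +)`
by an additive atom. -/
def AddFurstenberg (S : Type*) [AddZeroClass S] : Prop :=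
  ∀ s : S, s ≠ 0 → ∃ a t : S, IsAddAtom a ∧ s = a + t


section GroupAlg
variable {S : Type*} [CommSemiring S] {G : Type*} [AddCommGroup G]

/-- A monomial `s·x^g` in the group semidomain `S[G]`. -/
def IsMonomial (f : AddMonoidAlgebra S G) : Prop :=
  ∃ (g : G) (s : S), f = AddMonoidAlgebra.single g s

/-- `f` is monolithic: every factorization of `f` in `S[G]` has a monomial factor. -/
def Monolithic (f : AddMonoidAlgebra S G) : Prop :=
  f ≠ 0 ∧ ∀ p q : AddMonoidAlgebra S G, f = p * q → IsMonomial p ∨ IsMonomial q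

end GroupAlg

/-!
Over an additively reduced semidomain nothing cancels in a product, so the support of `p * q` is
the sumset `A + B` of the supports. If `A = {a₁ < ⋯ < a₀}` and `B = {b₁ < ⋯ < b₀}` both have two
elements, then `a₀ + b₀ = g₀` and `a₁ + b₁ = gₙ`, while `a₁ + b₀` and `a₀ + b₁` lie below `g₀`, hence
are at most `g₁`. Their sum is `g₀ + gₙ ≥ 2 g₁`, so both equal `g₁`; this pins `A = {a₁, a₀}` and
`B = {b₁, b₀}`, so `A + B` has at most three elements, fewer than the `n + 1 ≥ 4` terms of `f`.
-/

open Pointwise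

lemma IsSemidomain.noZeroDivisors {S : Type*} [CommSemiring S] (hS : IsSemidomain S) :
    NoZeroDivisors S := by
  obtain ⟨W⟩ := hS
  let := W.commRing
  have := W.isDomain
  exact W.inj.noZeroDivisors W.emb (map_zero _) (map_mul _)

lemma AddReduced.subsingleton_addUnits {S : Type*} [AddMonoid S] (hS : AddReduced S) :
    Subsingleton (AddUnits S) :=
  ⟨fun u v => AddUnits.ext <| (hS _ _ u.val_neg).trans (hS _ _ v.val_neg).symm⟩

lemma IsGreatest.add {M : Type*} [Add M] [Preorder M] [AddLeftMono M] [AddRightMono M]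
    {s t : Set M} {a b : M} (ha : IsGreatest s a) (hb : IsGreatest t b) :
    IsGreatest (s + t) (a + b) :=
  ⟨Set.add_mem_add ha.1 hb.1, add_mem_upperBounds_add ha.2 hb.2⟩

lemma IsLeast.add {M : Type*} [Add M] [Preorder M] [AddLeftMono M] [AddRightMono M]
    {s t : Set M} {a b : M} (ha : IsLeast s a) (hb : IsLeast t b) :
    IsLeast (s + t) (a + b) :=
  ⟨Set.add_mem_add ha.1 hb.1, add_mem_lowerBounds_add ha.2 hb.2⟩

lemma Antitone.isGreatest_range {α β : Type*} [Preorder α] [OrderBot α] [Preorder β] {f : α → β}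
    (hf : Antitone f) : IsGreatest (Set.range f) (f ⊥) :=
  ⟨Set.mem_range_self _, Set.forall_mem_range.2 fun _ => hf bot_le⟩

lemma Antitone.isLeast_range {α β : Type*} [Preorder α] [OrderTop α] [Preorder β] {f : α → β}
    (hf : Antitone f) : IsLeast (Set.range f) (f ⊤) :=
  ⟨Set.mem_range_self _, Set.forall_mem_range.2 fun _ => hf le_top⟩

namespace AddMonoidAlgebra

variable {S G : Type*}

theorem support_coeff_mul_eq [Semiring S] [NoZeroDivisors S] [Subsingleton (AddUnits S)]
    [Add G] [DecidableEq G] (x y : AddMonoidAlgebra S G) :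
    (x * y).coeff.support = x.coeff.support + y.coeff.support := by
  refine (support_coeff_mul_subset x y).antisymm fun m hm => ?_
  obtain ⟨a, ha, b, hb, rfl⟩ := Finset.mem_add.mp hm
  rw [Finsupp.mem_support_iff, coeff_mul, Finsupp.sum, Ne, Finset.sum_eq_zero_iff]
  intro h
  have hab : x.coeff a * y.coeff b = 0 := by
    simpa using Finset.sum_eq_zero_iff.mp (h a ha) b hb
  exact mul_ne_zero (Finsupp.mem_support_iff.mp ha) (Finsupp.mem_support_iff.mp hb) hab

theorem support_coeff_sum_single [Semiring S] [DecidableEq G] {ι : Type*} (t : Finset ι)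
    {g : ι → G} {s : ι → S} (hg : Function.Injective g) (hs : ∀ i, s i ≠ 0) :
    (∑ i ∈ t, single (g i) (s i)).coeff.support = t.image g := by
  rw [coeff_sum, Finsupp.support_sum_eq_biUnion]
  · simp only [coeff_single, Finsupp.support_single _ (hs _), Finset.biUnion_singleton]
  · intro i j hij
    simpa [coeff_single, Finsupp.support_single _ (hs _)] using hg.ne hij

end AddMonoidAlgebra

lemma support_coeff_nontrivial_of_not_isMonomial {S G : Type*} [CommSemiring S] [AddCommGroup G]
    {x : AddMonoidAlgebra S G} (hx : ¬ IsMonomial x) : x.coeff.support.Nontrivial := by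
  rw [← Finset.one_lt_card_iff_nontrivial, ← not_le, Finsupp.card_support_le_one]
  rintro ⟨a, ha⟩
  exact hx ⟨a, x.coeff a, AddMonoidAlgebra.coeff_injective ha⟩

namespace Finset

variable {G : Type*} [AddCommMonoid G] [LinearOrder G] [IsOrderedCancelAddMonoid G]

theorem card_add_le_three_of_two_nsmul_le {A B : Finset G} {a₀ a₁ b₀ b₁ c : G}
    (ha₀ : IsGreatest (A : Set G) a₀) (ha₁ : IsLeast (A : Set G) a₁) (ha : a₁ < a₀)
    (hb₀ : IsGreatest (B : Set G) b₀) (hb₁ : IsLeast (B : Set G) b₁) (hb : b₁ < b₀)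
    (hc : ∀ x ∈ A + B, x < a₀ + b₀ → x ≤ c) (h2c : 2 • c ≤ a₀ + b₀ + (a₁ + b₁)) :
    #(A + B) ≤ 3 := by
  have hc₁ : a₁ + b₀ ≤ c := hc _ (add_mem_add ha₁.1 hb₀.1) (add_lt_add_left ha b₀)
  have hc₂ : a₀ + b₁ ≤ c := hc _ (add_mem_add ha₀.1 hb₁.1) (add_lt_add_right hb a₀)
  have hsum : a₁ + b₀ + (a₀ + b₁) = c + c := by
    refine le_antisymm (add_le_add hc₁ hc₂) ?_
    rw [← two_nsmul]
    exact h2c.trans_eq (by abel)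
  obtain ⟨h₁, h₂⟩ := (add_eq_add_iff_eq_and_eq hc₁ hc₂).mp hsum
  have hA : ∀ a ∈ A, a < a₀ → a = a₁ := fun a ha hlt =>
    le_antisymm (le_of_add_le_add_right (h₁ ▸ hc _ (add_mem_add ha hb₀.1) (add_lt_add_left hlt b₀)))
      (ha₁.2 ha)
  have hB : ∀ b ∈ B, b < b₀ → b = b₁ := fun b hb hlt =>
    le_antisymm (le_of_add_le_add_left (h₂ ▸ hc _ (add_mem_add ha₀.1 hb) (add_lt_add_right hlt a₀)))
      (hb₁.2 hb)
  refine (card_le_card (t := {a₁ + b₁, c, a₀ + b₀}) ?_).trans card_le_three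
  intro x hx
  obtain ⟨a, ha, b, hb, rfl⟩ := mem_add.mp hx
  rcases (ha₀.2 ha).lt_or_eq with hlt | rfl <;> rcases (hb₀.2 hb).lt_or_eq with hlt' | rfl
  · simp [hA a ha hlt, hB b hb hlt']
  · simp [hA a ha hlt, ← h₁]
  · simp [hB b hb hlt', ← h₂]
  · simp

theorem add_ne_image_of_two_nsmul_le {A B : Finset G} (hA : A.Nontrivial) (hB : B.Nontrivial)
    {n : ℕ} {g : Fin (n + 4) → G} (hg : StrictAnti g) (hgap : 2 • g 1 ≤ g 0 + g (Fin.last _)) :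
    A + B ≠ univ.image g := by
  intro hAB
  have hrange : (A + B : Set G) = Set.range g := by
    rw [← coe_add, hAB, coe_image, coe_univ, Set.image_univ]
  have ha₀ := isGreatest_max' A hA.nonempty
  have ha₁ := isLeast_min' A hA.nonempty
  have hb₀ := isGreatest_max' B hB.nonempty
  have hb₁ := isLeast_min' B hB.nonempty
  have htop : A.max' _ + B.max' _ = g 0 :=
    (ha₀.add hb₀).unique (hrange ▸ hg.antitone.isGreatest_range)
  have hbot : A.min' _ + B.min' _ = g (Fin.last _) :=
    (ha₁.add hb₁).unique (hrange ▸ hg.antitone.isLeast_range)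
  have hsnd : ∀ x ∈ A + B, x < g 0 → x ≤ g 1 := by
    rw [hAB]
    rintro _ hx hlt
    obtain ⟨i, -, rfl⟩ := mem_image.mp hx
    exact hg.antitone (Fin.one_le_of_ne_zero fun hi => hlt.ne (congrArg g hi))
  have hcard := card_add_le_three_of_two_nsmul_le ha₀ ha₁
    (min'_lt_max'_of_card _ (one_lt_card_iff_nontrivial.2 hA)) hb₀ hb₁
    (min'_lt_max'_of_card _ (one_lt_card_iff_nontrivial.2 hB)) (htop ▸ hsnd) (htop ▸ hbot ▸ hgap)
  rw [hAB, card_image_of_injective _ hg.injective, card_univ, Fintype.card_fin] at hcard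
  omega

end Finset

/-- If `f = ∑_{i=0}^n s_i x^{g_i}` with `g_0 > ⋯ > g_n`, all `s_i ≠ 0`, more than three
terms, and `2g_1 ≤ g_0 + g_n`, then `f` is monolithic. -/
theorem monolithic_of_two_smul_snd_le
    {S : Type*} [CommSemiring S] {G : Type*} [AddCommGroup G] [LinearOrder G] [IsOrderedAddMonoid G]
    (hS : IsSemidomain S) (hred : AddReduced S)
    (n : ℕ) (hn : 3 ≤ n) (s : Fin (n + 1) → S) (g : Fin (n + 1) → G)
    (hs : ∀ i, s i ≠ 0) (hg : StrictAnti g)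
    (hgap : 2 • g ⟨1, by omega⟩ ≤ g ⟨0, by omega⟩ + g ⟨n, by omega⟩)
    (f : AddMonoidAlgebra S G)
    (hf : f = ∑ i, AddMonoidAlgebra.single (g i) (s i)) :
    Monolithic f := by
  have := hS.noZeroDivisors
  have := hred.subsingleton_addUnits
  have hsupp : f.coeff.support = Finset.univ.image g :=
    hf ▸ AddMonoidAlgebra.support_coeff_sum_single _ hg.injective hs
  refine ⟨fun hf₀ => ?_, fun p q hpq => ?_⟩
  · rw [hf₀, AddMonoidAlgebra.coeff_zero, Finsupp.support_zero] at hsupp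
    exact (Finset.univ_nonempty.image g).ne_empty hsupp.symm
  by_contra! ⟨hp, hq⟩
  obtain ⟨m, rfl⟩ := Nat.exists_eq_add_of_le' hn
  refine Finset.add_ne_image_of_two_nsmul_le (support_coeff_nontrivial_of_not_isMonomial hp)
    (support_coeff_nontrivial_of_not_isMonomial hq) hg hgap ?_
  rw [← AddMonoidAlgebra.support_coeff_mul_eq, ← hpq, hsupp]
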